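/- arXiv:2101.05430 — 4 statements merged into one kernel-verified Lean document; each statement's English description precedes it below -/
import Mathlib

section
/- Correctness of the 3-GAND circuit of Figure 1 (the p = 3 case of Lemma 1): the composition, applied left to right, of the twenty gates Tof(3,4;t), O_3, Tof(3,4;t), Tof(1,2;4), O_2, Tof(1,2;4), O_1, Tof(1,2;4), O_2, Tof(1,2;4), Tof(3,4;t), O_3, Tof(3,4;t), Tof(1,2;4), O_2, Tof(1,2;4), O_1, Tof(1,2;4), O_2, Tof(1,2;4) is equal, as a function on states, to the map sending (x, q1, q2, q3, q4, qt) to (x, q1, q2, q3, q4, xor qt (g1 x && (g2 x && g3 x))). In particular, for arbitrary (dirty) initial values of the four ancillary bits q1, q2, q3, q4, all four are restored to their initial values and the target bit qt is flipped exactly when g1(x) ∧ g2(x) ∧ g3(x) holds. -/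
/-- The state space: input register of type `α` together with four ancillary
bits `q1, q2, q3, q4` and the target bit `qt`. -/
abbrev GState (α : Type*) := α × Bool × Bool × Bool × Bool × Bool

/-- Toffoli gate with controls on ancillae 3, 4 and target on the target bit. -/
def Tof34t {α : Type*} : GState α → GState α
  | (x, q1, q2, q3, q4, qt) => (x, q1, q2, q3, q4, xor qt (q3 && q4))

/-- Toffoli gate with controls on ancillae 1, 2 and target on ancilla 4. -/
def Tof124 {α : Type*} : GState α → GState α
  | (x, q1, q2, q3, q4, qt) => (x, q1, q2, q3, xor q4 (q1 && q2), qt)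

/-- Oracle call `O_1` for `g`: XORs `g x` onto ancilla 1. -/
def O1 {α : Type*} (g : α → Bool) : GState α → GState α
  | (x, q1, q2, q3, q4, qt) => (x, xor q1 (g x), q2, q3, q4, qt)

/-- Oracle call `O_2` for `g`: XORs `g x` onto ancilla 2. -/
def O2 {α : Type*} (g : α → Bool) : GState α → GState α
  | (x, q1, q2, q3, q4, qt) => (x, q1, xor q2 (g x), q3, q4, qt)

/-- Oracle call `O_3` for `g`: XORs `g x` onto ancilla 3. -/
def O3 {α : Type*} (g : α → Bool) : GState α → GState α
  | (x, q1, q2, q3, q4, qt) => (x, q1, q2, xor q3 (g x), q4, qt)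

/-- Correctness of the 3-GAND circuit of Figure 1: the composition (applied left to
right) of the twenty gates equals the map flipping the target bit by
`g1 x && (g2 x && g3 x)` while restoring all four dirty ancillae. -/
theorem threeGAND_correct {α : Type*} (g1 g2 g3 : α → Bool) :
    (Tof124 ∘ O2 g2 ∘ Tof124 ∘ O1 g1 ∘ Tof124 ∘ O2 g2 ∘ Tof124 ∘
     Tof34t ∘ O3 g3 ∘ Tof34t ∘
     Tof124 ∘ O2 g2 ∘ Tof124 ∘ O1 g1 ∘ Tof124 ∘ O2 g2 ∘ Tof124 ∘
     Tof34t ∘ O3 g3 ∘ Tof34t : GState α → GState α) =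
    fun s : GState α =>
      match s with
      | (x, q1, q2, q3, q4, qt) => (x, q1, q2, q3, q4, xor qt (g1 x && (g2 x && g3 x))) := by
  funext s
  obtain ⟨x, q1, q2, q3, q4, qt⟩ := s
  simp only [Function.comp, Tof124, Tof34t, O1, O2, O3]
  congr 1
  congr 1
  · cases q1 <;> cases g1 x <;> cases q2 <;> cases g2 x <;> rfl
  congr 1
  · cases q1 <;> cases g1 x <;> cases q2 <;> cases g2 x <;> rfl
  congr 1
  · cases q3 <;> cases g3 x <;> rfl
  cases q1 <;> cases g1 x <;> cases q2 <;> cases g2 x <;> cases q3 <;> cases g3 x <;> cases q4 <;> cases qt <;> rfl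
end

section
/- Correctness of the top-phase block (AND of two oracle values into a dirty ancilla): the composition, applied left to right, of the seven gates Tof(1,2;4), O_2, Tof(1,2;4), O_1, Tof(1,2;4), O_2, Tof(1,2;4) is equal, as a function on states, to the map sending (x, q1, q2, q3, q4, qt) to (x, xor q1 (g1 x), q2, q3, xor q4 (g1 x && g2 x), qt). In particular, regardless of the arbitrary (dirty) initial values of q1, q2, q4, this block XORs g1(x) ∧ g2(x) onto q4, restores q2, and perturbs q1 by g1(x), using four Toffoli gates, two calls to O_2 and one call to O_1. -/
/-- Correctness of the top-phase block: the composition (applied left to right)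
of the seven gates Tof(1,2;4), O_2, Tof(1,2;4), O_1, Tof(1,2;4), O_2,
Tof(1,2;4) XORs g1(x) ∧ g2(x) onto the dirty ancilla q4, restores q2 and
perturbs q1 by g1(x), leaving q3 and the target untouched. -/
theorem topPhase_correct {α : Type*} (g1 g2 : α → Bool) :
    (Tof124 ∘ O2 g2 ∘ Tof124 ∘ O1 g1 ∘ Tof124 ∘ O2 g2 ∘ Tof124 :
      GState α → GState α) =
    fun s : GState α =>
      match s with
      | (x, q1, q2, q3, q4, qt) =>
          (x, xor q1 (g1 x), q2, q3, xor q4 (g1 x && g2 x), qt) := by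
  funext ⟨x,q1,q2,q3,q4,qt⟩
  simp only [Function.comp, Tof124, O1, O2]
  cases g1 x <;> cases g2 x <;> cases q1 <;> cases q2 <;> cases q4 <;> rfl
end

section
/- Uniqueness of √2/2-approximation (the error threshold ε < √2/2 of Theorem 3): for every n : ℕ, every continuous linear operator U : H_n →L[ℂ] H_n, and all f, g : (Fin n → Bool) → Bool, if ‖U − T_f‖ < √2/2 and ‖U − T_g‖ < √2/2 in operator norm, then f = g. Hence any single operator can approximate the oracle of at most one Boolean function within error less than √2/2. -/
/-! If `f x ≠ g x`, then `T_f` and `T_g` send the basis vector `e_(x,0)` to two distinct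
orthonormal vectors, so `‖T_f - T_g‖ ≥ √2`; the triangle inequality through `U` then forbids
both errors from being below `√2/2`. -/

/-- The oracle operator `T_f` on `H_n = EuclideanSpace ℂ ((Fin n → Bool) × Bool)`,
given coordinatewise by `(T_f v) (x, c) = v (x, c ⊕ f x)`; it models the quantum
oracle `|x⟩|c⟩ ↦ |x⟩|c ⊕ f(x)⟩`. -/
noncomputable def oracleOp (n : ℕ) (f : (Fin n → Bool) → Bool) :
    EuclideanSpace ℂ ((Fin n → Bool) × Bool) →L[ℂ]
      EuclideanSpace ℂ ((Fin n → Bool) × Bool) :=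
  LinearMap.toContinuousLinearMap
    { toFun := fun v => WithLp.toLp 2 (fun p : (Fin n → Bool) × Bool => v (p.1, xor p.2 (f p.1)))
      map_add' := fun _ _ => rfl
      map_smul' := fun _ _ => rfl }

theorem Orthonormal.norm_sub_of_ne {𝕜 E ι : Type*} [RCLike 𝕜] [NormedAddCommGroup E]
    [InnerProductSpace 𝕜 E] {v : ι → E} (hv : Orthonormal 𝕜 v) {i j : ι} (hij : i ≠ j) :
    ‖v i - v j‖ = Real.sqrt 2 := by
  have hsq : ‖v i - v j‖ ^ 2 = 2 := by
    rw [@norm_sub_sq 𝕜, hv.1 i, hv.1 j, hv.2 hij]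
    norm_num
  rw [← hsq, Real.sqrt_sq (norm_nonneg _)]

theorem oracleOp_single (n : ℕ) (f : (Fin n → Bool) → Bool) (x : Fin n → Bool) (c : Bool)
    (a : ℂ) :
    oracleOp n f (EuclideanSpace.single (x, c) a) =
      EuclideanSpace.single (x, xor c (f x)) a := by
  ext ⟨y, d⟩
  show EuclideanSpace.single (x, c) a (y, xor d (f y)) = _
  by_cases hyx : y = x
  · subst hyx
    cases c <;> cases d <;> cases f y <;> simp
  · simp [hyx]

theorem sqrt_two_le_norm_oracleOp_sub {n : ℕ} {f g : (Fin n → Bool) → Bool} (hfg : f ≠ g) :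
    Real.sqrt 2 ≤ ‖oracleOp n f - oracleOp n g‖ := by
  obtain ⟨x, hx⟩ := Function.ne_iff.mp hfg
  have hbasis := EuclideanSpace.orthonormal_single (𝕜 := ℂ) (ι := (Fin n → Bool) × Bool)
  calc Real.sqrt 2
      = ‖(oracleOp n f - oracleOp n g) (EuclideanSpace.single (x, false) 1)‖ := by
        rw [sub_apply, oracleOp_single, oracleOp_single,
          hbasis.norm_sub_of_ne (by simpa using hx)]
    _ ≤ ‖oracleOp n f - oracleOp n g‖ := by
        simpa using (oracleOp n f - oracleOp n g).le_opNorm (EuclideanSpace.single (x, false) 1)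

/-- Uniqueness of √2/2-approximation: a single operator can approximate the
oracle of at most one Boolean function to within operator-norm error < √2/2. -/
theorem oracleOp_approx_unique (n : ℕ)
    (U : EuclideanSpace ℂ ((Fin n → Bool) × Bool) →L[ℂ]
      EuclideanSpace ℂ ((Fin n → Bool) × Bool))
    (f g : (Fin n → Bool) → Bool)
    (hf : ‖U - oracleOp n f‖ < Real.sqrt 2 / 2)
    (hg : ‖U - oracleOp n g‖ < Real.sqrt 2 / 2) : f = g := by
  by_contra hfg
  rw [norm_sub_rev] at hf
  linarith [sqrt_two_le_norm_oracleOp_sub hfg,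
    norm_sub_le_norm_sub_add_norm_sub (oracleOp n f) U (oracleOp n g)]
end

section
/- Counting lower bound on CNF functions: for all n, m, k : ℕ, the set of functions f : (Fin n → Bool) → Bool that are CNF_{n,m}^k-representable has cardinality at least Nat.choose (Nat.choose n k) m, i.e. at least (C(n,k) choose m). (Each choice of m distinct k-element subsets of the variables yields, via monotone clauses, a CNF_{n,m}^k-representable function, and distinct choices yield distinct functions.) -/
/-- A function `f : (Fin n → Bool) → Bool` is `CNF_{n,m}^k`-representable if it
is computed by a CNF with `m` clauses, each a set of at most `k` literals,
where a literal is a pair `(i, b)` asserting `x i = b`. -/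
def CNFRepresentable (n m k : ℕ) (f : (Fin n → Bool) → Bool) : Prop :=
  ∃ C : Fin m → Finset (Fin n × Bool),
    (∀ j : Fin m, (C j).card ≤ k) ∧
    ∀ x : Fin n → Bool, (f x = true ↔ ∀ j : Fin m, ∃ l ∈ C j, x l.1 = l.2)

/-- The monotone function associated to a family of clauses. -/
def cnfFun {n : ℕ} (T : Finset (Finset (Fin n))) : (Fin n → Bool) → Bool :=
  fun x => decide (∀ S ∈ T, ∃ i ∈ S, x i = true)

/-- Counting lower bound on CNF functions: there are at least
`Nat.choose (Nat.choose n k) m` distinct `CNF_{n,m}^k`-representable functions. -/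
theorem card_CNFRepresentable_ge (n m k : ℕ) :
    Nat.choose (Nat.choose n k) m ≤
      {f : (Fin n → Bool) → Bool | CNFRepresentable n m k f}.ncard := by
  classical
  set 𝒜 : Finset (Finset (Fin n)) := Finset.univ.powersetCard k with h𝒜
  set ℬ : Finset (Finset (Finset (Fin n))) := 𝒜.powersetCard m with hℬ
  have hℬcard : ℬ.card = Nat.choose (Nat.choose n k) m := by
    simp [hℬ, h𝒜, Finset.card_powersetCard]
  -- key membership lemma
  have hmem : ∀ T ∈ ℬ, cnfFun T ∈
      {f : (Fin n → Bool) → Bool | CNFRepresentable n m k f} := by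
    intro T hT
    rw [hℬ, Finset.mem_powersetCard] at hT
    obtain ⟨hTsub, hTcard⟩ := hT
    have e : Fin m ≃ T := (T.equivFinOfCardEq hTcard).symm
    refine ⟨fun j => ((e j : Finset (Fin n))).image (fun i => (i, true)), ?_, ?_⟩
    · intro j
      have hk : ((e j : Finset (Fin n))).card = k := by
        have := hTsub (e j).2
        rw [h𝒜, Finset.mem_powersetCard] at this
        exact this.2
      calc (((e j : Finset (Fin n))).image (fun i => (i, true))).card
          ≤ ((e j : Finset (Fin n))).card := Finset.card_image_le
        _ = k := hk
    · intro x
      rw [cnfFun, decide_eq_true_iff]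
      constructor
      · intro h j
        obtain ⟨i, hi, hxi⟩ := h (e j) (e j).2
        exact ⟨(i, true), Finset.mem_image_of_mem _ hi, hxi⟩
      · intro h S hS
        obtain ⟨l, hl, hxl⟩ := h (e.symm ⟨S, hS⟩)
        simp only [Equiv.apply_symm_apply] at hl
        rw [Finset.mem_image] at hl
        obtain ⟨i, hi, rfl⟩ := hl
        exact ⟨i, hi, hxl⟩
  -- injectivity on ℬ
  have hinj : Set.InjOn cnfFun (↑ℬ : Set (Finset (Finset (Fin n)))) := by
    intro T hT T' hT' hfeq
    rw [Finset.mem_coe] at hT hT'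
    rw [hℬ, Finset.mem_powersetCard] at hT hT'
    have key : ∀ (T₁ T₂ : Finset (Finset (Fin n))), T₁ ⊆ 𝒜 → T₂ ⊆ 𝒜 →
        cnfFun T₁ = cnfFun T₂ → T₁ ⊆ T₂ := by
      intro T₁ T₂ h₁ h₂ heq S hS
      have hval : cnfFun T₁ (fun i => decide (i ∉ S)) = false := by
        rw [cnfFun, decide_eq_false_iff_not]
        push_neg
        refine ⟨S, hS, ?_⟩
        intro i hi
        simp [hi]
      rw [heq] at hval
      rw [cnfFun, decide_eq_false_iff_not] at hval
      push_neg at hval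
      obtain ⟨S', hS', hS'sub⟩ := hval
      have hsub : S' ⊆ S := by
        intro i hi
        have := hS'sub i hi
        simpa using this
      have hcS : S.card = k := by
        have := h₁ hS; rw [h𝒜, Finset.mem_powersetCard] at this; exact this.2
      have hcS' : S'.card = k := by
        have := h₂ hS'; rw [h𝒜, Finset.mem_powersetCard] at this; exact this.2
      have : S' = S := Finset.eq_of_subset_of_card_le hsub (by omega)
      rwa [← this]
    exact Finset.Subset.antisymm (key T T' hT.1 hT'.1 hfeq)
      (key T' T hT'.1 hT.1 hfeq.symm)
  calc Nat.choose (Nat.choose n k) m = ℬ.card := hℬcard.symm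
    _ = (ℬ.image cnfFun).card := (Finset.card_image_of_injOn hinj).symm
    _ = (↑(ℬ.image cnfFun) : Set _).ncard := (Set.ncard_coe_finset _).symm
    _ ≤ {f : (Fin n → Bool) → Bool | CNFRepresentable n m k f}.ncard := by
        have hsub : (↑(ℬ.image cnfFun) : Set ((Fin n → Bool) → Bool)) ⊆
            {f : (Fin n → Bool) → Bool | CNFRepresentable n m k f} := by
          intro f hf
          rw [Finset.mem_coe, Finset.mem_image] at hf
          obtain ⟨T, hT, rfl⟩ := hf
          exact hmem T hT
        exact Set.ncard_le_ncard (s := (↑(ℬ.image cnfFun) : Set ((Fin n → Bool) → Bool))) hsub (Set.toFinite _)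
end
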